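/- arXiv:math/0010321 — 2 statements merged into one kernel-verified Lean document; each statement's English description precedes it below -/
import Mathlib

section
/- The Gerstenhaber bracket satisfies the graded Jacobi identity: for φ1 ∈ C^{k1+1}(A,A), φ2 ∈ C^{k2+1}(A,A), φ3 ∈ C^{k3+1}(A,A), one has (−1)^{k1·k3} [[φ1,φ2],φ3] + (−1)^{k2·k1} [[φ2,φ3],φ1] + (−1)^{k3·k2} [[φ3,φ1],φ2] = 0. -/
set_option linter.unusedSectionVars false
set_option linter.unusedTactic false
set_option maxHeartbeats 1000000

/-- The (non-symmetrized) Gerstenhaber composition `φ₁ ∘ φ₂` of Hochschild cochains: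
for `φ₁` of degree `k₁` (i.e. a `(k₁+1)`-cochain) and `φ₂` of degree `k₂`,
`(φ₁ ∘ φ₂)(a₀ ⊗ … ⊗ a_{k₁+k₂}) =
  ∑_{i=0}^{k₁} (-1)^{i k₂} φ₁(a₀ ⊗ … ⊗ a_{i-1} ⊗ φ₂(a_i ⊗ … ⊗ a_{i+k₂}) ⊗ … ⊗ a_{k₁+k₂})`. -/
def gcomp {A : Type*} [AddCommGroup A] (k1 k2 : ℕ)
    (f : (Fin (k1 + 1) → A) → A) (g : (Fin (k2 + 1) → A) → A) :
    (Fin (k1 + k2 + 1) → A) → A := fun a =>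
  ∑ i : Fin (k1 + 1), ((-1 : ℤ) ^ ((i : ℕ) * k2)) •
    f (fun j => if _ : (j : ℕ) < (i : ℕ) then a ⟨j, by omega⟩
      else if _ : (j : ℕ) = (i : ℕ) then g (fun l => a ⟨(i : ℕ) + (l : ℕ), by omega⟩)
      else a ⟨(j : ℕ) + k2, by omega⟩)

/-- The Gerstenhaber bracket `[φ₁, φ₂] = φ₁ ∘ φ₂ - (-1)^{k₁ k₂} φ₂ ∘ φ₁` of Hochschild
cochains. -/
def gbracket {A : Type*} [AddCommGroup A] (k1 k2 : ℕ)
    (f : (Fin (k1 + 1) → A) → A) (g : (Fin (k2 + 1) → A) → A) :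
    (Fin (k1 + k2 + 1) → A) → A := fun a =>
  gcomp k1 k2 f g a - ((-1 : ℤ) ^ (k1 * k2)) •
    gcomp k2 k1 g f (fun j => a (Fin.cast (by omega) j))

namespace GJac
variable {A : Type*} [AddCommGroup A]

/-- Insertion of `G` (arity `k+1`) into `F` at position `i`, on ℕ-indexed arrays. -/
def insN (i k : ℕ) (F G : (ℕ → A) → A) (b : ℕ → A) : A :=
  F (fun n => if n < i then b n else if n = i then G (fun l => b (i + l)) else b (n + k))

def compN (k1 k2 : ℕ) (F G : (ℕ → A) → A) (b : ℕ → A) : A :=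
  ∑ i ∈ Finset.range (k1+1), ((-1:ℤ)^(i*k2)) • insN i k2 F G b

def brN (k1 k2 : ℕ) (F G : (ℕ → A) → A) (b : ℕ → A) : A :=
  compN k1 k2 F G b - ((-1:ℤ)^(k1*k2)) • compN k2 k1 G F b

/-- `F` only depends on the first `k+1` entries. -/
def Depk (k : ℕ) (F : (ℕ → A) → A) : Prop :=
  ∀ b b' : ℕ → A, (∀ m ≤ k, b m = b' m) → F b = F b'

/-- `F` is additive in each of its first `k+1` slots. -/
def SlotAdd (k : ℕ) (F : (ℕ → A) → A) : Prop :=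
  ∀ (b : ℕ → A) (i : ℕ), i ≤ k → ∀ x y : A,
    F (Function.update b i (x+y)) = F (Function.update b i x) + F (Function.update b i y)

theorem insN_nested (i m k2 k3 : ℕ) (hm : m ≤ k2) (F G H : (ℕ → A) → A) (b : ℕ → A) :
    insN (i+m) k3 (insN i k2 F G) H b = insN i (k2+k3) F (insN m k3 G H) b := by
  unfold insN
  apply congrArg F
  funext n
  rcases lt_trichotomy n i with h | h | h
  · have h1 : n < i + m := by omega
    simp only [if_pos h, if_pos h1]
  · subst h
    have h1 : ¬ (n < n) := lt_irrefl n
    simp only [if_neg h1, if_pos rfl]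
    apply congrArg G
    funext l
    rcases lt_trichotomy l m with h2 | h2 | h2
    · have e1 : n + l < n + m := by omega
      simp only [if_pos h2, if_pos e1]
    · subst h2
      have e1 : ¬ (n + l < n + l) := lt_irrefl _
      have e2 : ¬ (l < l) := lt_irrefl _
      simp only [if_neg e1, if_pos rfl, if_neg e2]
      apply congrArg H
      funext t
      congr 1
      omega
    · have e1 : ¬ (n + l < n + m) := by omega
      have e2 : ¬ (n + l = n + m) := by omega
      have e3 : ¬ (l < m) := by omega
      have e4 : ¬ (l = m) := by omega
      simp only [if_neg e1, if_neg e2, if_neg e3, if_neg e4]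
      congr 1
      omega
  · have e1 : ¬ (n < i) := by omega
    have e2 : ¬ (n = i) := by omega
    have e3 : ¬ (n + k2 < i + m) := by omega
    have e4 : ¬ (n + k2 = i + m) := by omega
    simp only [if_neg e1, if_neg e2, if_neg e3, if_neg e4]
    congr 1
    omega

theorem insN_disj (j i k2 k3 : ℕ) (hji : j < i) (F G H : (ℕ → A) → A)
    (hH : Depk k3 H) (b : ℕ → A) :
    insN j k3 (insN i k2 F G) H b = insN (i+k3) k2 (insN j k3 F H) G b := by
  unfold insN
  apply congrArg F
  funext n
  rcases lt_trichotomy n j with h | h | h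
  · have h1 : n < i := by omega
    have h2 : n < i + k3 := by omega
    simp only [if_pos h, if_pos h1, if_pos h2]
  · subst h
    have e1 : ¬ (n < n) := lt_irrefl _
    have h1 : n < i := hji
    simp only [if_pos h1, if_neg e1, if_pos rfl]
    apply hH
    intro m hm
    have : n + m < i + k3 := by omega
    simp only [if_pos this]
  · have e1 : ¬ (n < j) := by omega
    have e2 : ¬ (n = j) := by omega
    simp only [if_neg e1, if_neg e2]
    rcases lt_trichotomy n i with h3 | h3 | h3
    · have f1 : n + k3 < i + k3 := by omega
      simp only [if_pos h3, if_neg e1, if_neg e2, if_pos f1]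
    · subst h3
      have e3 : ¬ (n < n) := lt_irrefl _
      have e4 : ¬ (n + k3 < n + k3) := lt_irrefl _
      simp only [if_neg e3, if_pos rfl, if_neg e4]
      apply congrArg G
      funext l
      have f1 : ¬ (n + l < j) := by omega
      have f2 : ¬ (n + l = j) := by omega
      simp only [if_neg f1, if_neg f2]
      congr 1
      omega
    · have e3 : ¬ (n < i) := by omega
      have e4 : ¬ (n = i) := by omega
      have f1 : ¬ (n + k2 < j) := by omega
      have f2 : ¬ (n + k2 = j) := by omega
      have f3 : ¬ (n + k3 < i + k3) := by omega
      have f4 : ¬ (n + k3 = i + k3) := by omega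
      simp only [if_neg e3, if_neg e4, if_neg f1, if_neg f2, if_neg f3, if_neg f4]
      congr 1
      omega

theorem insN_eq_update (i k : ℕ) (F G : (ℕ → A) → A) (b : ℕ → A) :
    insN i k F G b = F (Function.update (fun n => if n < i then b n else b (n + k)) i
      (G (fun l => b (i + l)))) := by
  unfold insN
  apply congrArg F
  funext n
  rcases lt_trichotomy n i with h | h | h
  · have e : ¬ (n = i) := by omega
    simp only [if_pos h, Function.update_apply, if_neg e]
  · subst h
    simp only [if_neg (lt_irrefl n), if_pos rfl, Function.update_apply]
  · have e1 : ¬ (n < i) := by omega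
    have e2 : ¬ (n = i) := by omega
    simp only [if_neg e1, if_neg e2, Function.update_apply]

/-- the one-slot additive map packaged as an `AddMonoidHom`. -/
noncomputable def slotHom (k : ℕ) (F : (ℕ → A) → A) (hF : SlotAdd k F) (d : ℕ → A)
    (i : ℕ) (hi : i ≤ k) : A →+ A :=
  AddMonoidHom.mk' (fun x => F (Function.update d i x)) (hF d i hi)

theorem insN_inner_sum {ι : Type*} (s : Finset ι) (ε : ι → ℤ) (Gs : ι → (ℕ → A) → A)
    (i k k1 : ℕ) (hi : i ≤ k1) (F : (ℕ → A) → A) (hF : SlotAdd k1 F) (b : ℕ → A) :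
    insN i k F (fun c => ∑ m ∈ s, ε m • Gs m c) b
      = ∑ m ∈ s, ε m • insN i k F (Gs m) b := by
  simp only [insN_eq_update]
  have h := map_sum (slotHom k1 F hF (fun n => if n < i then b n else b (n + k)) i hi)
    (fun m => ε m • Gs m (fun l => b (i + l))) s
  simp only [slotHom, AddMonoidHom.mk'_apply, map_zsmul] at h
  exact h

theorem insN_inner_sub_zsmul (i k k1 : ℕ) (hi : i ≤ k1) (F X Y : (ℕ → A) → A)
    (hF : SlotAdd k1 F) (z : ℤ) (b : ℕ → A) :
    insN i k F (fun c => X c - z • Y c) b = insN i k F X b - z • insN i k F Y b := by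
  simp only [insN_eq_update]
  have h := map_sub (slotHom k1 F hF (fun n => if n < i then b n else b (n + k)) i hi)
    (X (fun l => b (i + l))) (z • Y (fun l => b (i + l)))
  simp only [slotHom, AddMonoidHom.mk'_apply, map_zsmul] at h
  exact h

theorem insN_outer_sub_zsmul (j k : ℕ) (X Y H : (ℕ → A) → A) (z : ℤ) (b : ℕ → A) :
    insN j k (fun c => X c - z • Y c) H b = insN j k X H b - z • insN j k Y H b := rfl

theorem compN_outer_sub_zsmul (K k : ℕ) (X Y H : (ℕ → A) → A) (z : ℤ) (b : ℕ → A) :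
    compN K k (fun c => X c - z • Y c) H b
      = compN K k X H b - z • compN K k Y H b := by
  unfold compN
  simp only [insN_outer_sub_zsmul, smul_sub, Finset.sum_sub_distrib, smul_comm _ z,
    Finset.smul_sum]

theorem compN_inner_sub_zsmul (K k1 : ℕ) (F X Y : (ℕ → A) → A) (hF : SlotAdd k1 F)
    (z : ℤ) (b : ℕ → A) :
    compN k1 K F (fun c => X c - z • Y c) b
      = compN k1 K F X b - z • compN k1 K F Y b := by
  unfold compN
  rw [Finset.smul_sum, ← Finset.sum_sub_distrib]
  refine Finset.sum_congr rfl fun i hi => ?_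
  have hi' : i ≤ k1 := by simpa using Nat.lt_succ_iff.mp (Finset.mem_range.mp hi)
  rw [insN_inner_sub_zsmul i K k1 hi' F X Y hF z b, smul_sub, smul_comm]

theorem neg_one_pow_mod (a : ℕ) : ((-1:ℤ))^a = (-1)^(a % 2) := by
  conv_lhs => rw [← Nat.div_add_mod a 2]
  rw [pow_add, pow_mul]
  norm_num

theorem neg_one_pow_congr {a b : ℕ} (h : a % 2 = b % 2) : ((-1:ℤ))^a = (-1)^b := by
  rw [neg_one_pow_mod a, neg_one_pow_mod b, h]

/-- the index set of "disjoint" pairs. -/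
def disjIdx (k1 k2 : ℕ) : Finset (ℕ × ℕ) :=
  (Finset.range (k1+1) ×ˢ Finset.range (k1+k2+1)).filter
    (fun p => p.2 < p.1 ∨ p.1 + k2 < p.2)

def disjTerm (k2 k3 : ℕ) (F G H : (ℕ → A) → A) (b : ℕ → A) (p : ℕ × ℕ) : A :=
  ((-1:ℤ)^(p.2*k3 + p.1*k2)) • insN p.2 k3 (insN p.1 k2 F G) H b

/-- `(F∘G)∘H - F∘(G∘H)` equals the sum of disjoint terms. -/
theorem assoc_defect (k1 k2 k3 : ℕ) (F G H : (ℕ → A) → A) (hF : SlotAdd k1 F)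
    (b : ℕ → A) :
    compN (k1+k2) k3 (compN k1 k2 F G) H b - compN k1 (k2+k3) F (compN k2 k3 G H) b
      = ∑ p ∈ disjIdx k1 k2, disjTerm k2 k3 F G H b p := by
  -- left double sum over all pairs
  have hleft : compN (k1+k2) k3 (compN k1 k2 F G) H b
      = ∑ p ∈ Finset.range (k1+1) ×ˢ Finset.range (k1+k2+1), disjTerm k2 k3 F G H b p := by
    rw [Finset.sum_product]
    unfold compN
    rw [Finset.sum_comm]
    refine Finset.sum_congr rfl fun j hj => ?_
    have : insN j k3 (fun c => ∑ i ∈ Finset.range (k1+1), ((-1:ℤ)^(i*k2)) • insN i k2 F G c)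
        H b = ∑ i ∈ Finset.range (k1+1), ((-1:ℤ)^(i*k2)) • insN j k3 (insN i k2 F G) H b := rfl
    rw [this, Finset.smul_sum]
    refine Finset.sum_congr rfl fun i hi => ?_
    rw [smul_smul, disjTerm, ← pow_add]
  -- right double sum over the nested pairs
  have hright : compN k1 (k2+k3) F (compN k2 k3 G H) b
      = ∑ p ∈ (Finset.range (k1+1) ×ˢ Finset.range (k1+k2+1)).filter
          (fun p => p.1 ≤ p.2 ∧ p.2 ≤ p.1 + k2), disjTerm k2 k3 F G H b p := by
    unfold compN
    have step : ∀ i ∈ Finset.range (k1+1),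
        ((-1:ℤ)^(i*(k2+k3))) • insN i (k2+k3) F
          (fun c => ∑ m ∈ Finset.range (k2+1), ((-1:ℤ)^(m*k3)) • insN m k3 G H c) b
        = ∑ m ∈ Finset.range (k2+1),
            ((-1:ℤ)^((i+m)*k3 + i*k2)) • insN i (k2+k3) F (insN m k3 G H) b := by
      intro i hi
      have hi' : i ≤ k1 := Nat.lt_succ_iff.mp (Finset.mem_range.mp hi)
      rw [insN_inner_sum (Finset.range (k2+1)) (fun m => ((-1:ℤ)^(m*k3)))
        (fun m => insN m k3 G H) i (k2+k3) k1 hi' F hF b, Finset.smul_sum]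
      refine Finset.sum_congr rfl fun m hm => ?_
      rw [smul_smul, ← pow_add]
      congr 2
      ring
    rw [Finset.sum_congr rfl step]
    -- now reindex (i,m) ↦ (i, i+m)
    rw [← Finset.sum_product']
    refine Finset.sum_nbij' (fun q => (q.1, q.1 + q.2)) (fun p => (p.1, p.2 - p.1)) ?_ ?_ ?_ ?_ ?_
    · rintro ⟨i, m⟩ hq
      simp only [Finset.mem_product, Finset.mem_range] at hq
      simp only [Finset.mem_filter, Finset.mem_product, Finset.mem_range]
      omega
    · rintro ⟨i, j⟩ hp
      simp only [Finset.mem_filter, Finset.mem_product, Finset.mem_range] at hp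
      simp only [Finset.mem_product, Finset.mem_range]
      omega
    · rintro ⟨i, m⟩ hq
      dsimp only
      simp only [Prod.mk.injEq]
      refine ⟨?_, ?_⟩ <;> first | trivial | omega
    · rintro ⟨i, j⟩ hp
      simp only [Finset.mem_filter, Finset.mem_product, Finset.mem_range] at hp
      dsimp only
      simp only [Prod.mk.injEq]
      refine ⟨?_, ?_⟩ <;> first | trivial | omega
    · rintro ⟨i, m⟩ hq
      simp only [Finset.mem_product, Finset.mem_range] at hq
      simp only [disjTerm]
      rw [insN_nested i m k2 k3 (by omega) F G H b]
  rw [hleft, hright, disjIdx]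
  rw [← Finset.sum_filter_add_sum_filter_not
    (Finset.range (k1+1) ×ˢ Finset.range (k1+k2+1))
    (fun p => p.1 ≤ p.2 ∧ p.2 ≤ p.1 + k2) (disjTerm k2 k3 F G H b)]
  have : (Finset.range (k1+1) ×ˢ Finset.range (k1+k2+1)).filter
      (fun p => ¬ (p.1 ≤ p.2 ∧ p.2 ≤ p.1 + k2))
      = (Finset.range (k1+1) ×ˢ Finset.range (k1+k2+1)).filter
        (fun p => p.2 < p.1 ∨ p.1 + k2 < p.2) := by
    apply Finset.filter_congr
    intro p hp
    constructor
    · intro h; omega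
    · intro h; omega
  rw [this]
  abel


theorem neg_one_pow_add_two_mul (a c : ℕ) : ((-1:ℤ))^(a + 2*c) = (-1)^a := by
  rw [pow_add, pow_mul]
  norm_num

theorem disj_swap (k1 k2 k3 : ℕ) (F G H : (ℕ → A) → A) (hG : Depk k2 G) (hH : Depk k3 H)
    (b : ℕ → A) :
    ∑ p ∈ disjIdx k1 k2, disjTerm k2 k3 F G H b p
      = ((-1:ℤ)^(k2*k3)) • ∑ p ∈ disjIdx k1 k3, disjTerm k3 k2 F H G b p := by
  rw [Finset.smul_sum]
  refine Finset.sum_nbij'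
    (fun p => if p.2 < p.1 then (p.2, p.1 + k3) else (p.2 - k2, p.1))
    (fun q => if q.1 + k3 < q.2 then (q.2 - k3, q.1) else (q.2, q.1 + k2))
    ?_ ?_ ?_ ?_ ?_
  · rintro ⟨i, j⟩ hp
    simp only [disjIdx, Finset.mem_filter, Finset.mem_product, Finset.mem_range] at hp
    simp only [disjIdx]
    beta_reduce
    by_cases h : j < i
    · rw [if_pos h]
      simp only [Finset.mem_filter, Finset.mem_product, Finset.mem_range]
      omega
    · rw [if_neg h]
      simp only [Finset.mem_filter, Finset.mem_product, Finset.mem_range]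
      omega
  · rintro ⟨u, w⟩ hq
    simp only [disjIdx, Finset.mem_filter, Finset.mem_product, Finset.mem_range] at hq
    simp only [disjIdx]
    beta_reduce
    by_cases h : u + k3 < w
    · rw [if_pos h]
      simp only [Finset.mem_filter, Finset.mem_product, Finset.mem_range]
      omega
    · rw [if_neg h]
      simp only [Finset.mem_filter, Finset.mem_product, Finset.mem_range]
      omega
  · rintro ⟨i, j⟩ hp
    simp only [disjIdx, Finset.mem_filter, Finset.mem_product, Finset.mem_range] at hp
    beta_reduce
    by_cases h : j < i
    · rw [if_pos h]
      dsimp only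
      rw [if_pos (show j + k3 < i + k3 by omega)]
      simp only [Prod.mk.injEq]
      refine ⟨?_, ?_⟩ <;> first | trivial | omega
    · rw [if_neg h]
      dsimp only
      rw [if_neg (show ¬ (j - k2 + k3 < i) by omega)]
      simp only [Prod.mk.injEq]
      refine ⟨?_, ?_⟩ <;> first | trivial | omega
  · rintro ⟨u, w⟩ hq
    simp only [disjIdx, Finset.mem_filter, Finset.mem_product, Finset.mem_range] at hq
    beta_reduce
    by_cases h : u + k3 < w
    · rw [if_pos h]
      dsimp only
      rw [if_pos (show u < w - k3 by omega)]
      simp only [Prod.mk.injEq]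
      refine ⟨?_, ?_⟩ <;> first | trivial | omega
    · rw [if_neg h]
      dsimp only
      rw [if_neg (show ¬ (u + k2 < w) by omega)]
      simp only [Prod.mk.injEq]
      refine ⟨?_, ?_⟩ <;> first | trivial | omega
  · rintro ⟨i, j⟩ hp
    simp only [disjIdx, Finset.mem_filter, Finset.mem_product, Finset.mem_range] at hp
    dsimp only
    by_cases h : j < i
    · rw [if_pos h]
      simp only [disjTerm]
      rw [insN_disj j i k2 k3 h F G H hH b, smul_smul, ← pow_add]
      have he : k2*k3 + ((i + k3)*k2 + j*k3) = (j*k3 + i*k2) + 2*(k2*k3) := by ring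
      rw [he, neg_one_pow_add_two_mul]
    · rw [if_neg h]
      have hj : i + k2 < j := by omega
      obtain ⟨t, rfl⟩ : ∃ t, j = t + k2 := ⟨j - k2, by omega⟩
      simp only [disjTerm]
      have hit : i < t := by omega
      have hd := insN_disj i t k3 k2 hit F H G hG b
      rw [Nat.add_sub_cancel]
      rw [← hd, smul_smul, ← pow_add]
      congr 1
      ring

theorem preLie (k1 k2 k3 : ℕ) (F G H : (ℕ → A) → A) (hF : SlotAdd k1 F)
    (hG : Depk k2 G) (hH : Depk k3 H) (b : ℕ → A) :
    compN (k1+k2) k3 (compN k1 k2 F G) H b - compN k1 (k2+k3) F (compN k2 k3 G H) b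
      = ((-1:ℤ)^(k2*k3)) • (compN (k1+k3) k2 (compN k1 k3 F H) G b
          - compN k1 (k3+k2) F (compN k3 k2 H G) b) := by
  rw [assoc_defect k1 k2 k3 F G H hF b, assoc_defect k1 k3 k2 F H G hF b,
    disj_swap k1 k2 k3 F G H hG hH b]

theorem jacobiN (k1 k2 k3 : ℕ) (F1 F2 F3 : (ℕ → A) → A)
    (hS1 : SlotAdd k1 F1) (hS2 : SlotAdd k2 F2) (hS3 : SlotAdd k3 F3)
    (hD1 : Depk k1 F1) (hD2 : Depk k2 F2) (hD3 : Depk k3 F3) (b : ℕ → A) :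
    ((-1:ℤ)^(k1*k3)) • brN (k1+k2) k3 (brN k1 k2 F1 F2) F3 b
      + ((-1:ℤ)^(k2*k1)) • brN (k2+k3) k1 (brN k2 k3 F2 F3) F1 b
      + ((-1:ℤ)^(k3*k2)) • brN (k3+k1) k2 (brN k3 k1 F3 F1) F2 b = 0 := by
  have hbrEval : ∀ (kx ky : ℕ) (X Y : (ℕ → A) → A) (c : ℕ → A),
      brN kx ky X Y c = compN kx ky X Y c - ((-1:ℤ)^(kx*ky)) • compN ky kx Y X c :=
    fun _ _ _ _ _ => rfl
  have hlam : ∀ (kx ky : ℕ) (X Y : (ℕ → A) → A), brN kx ky X Y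
      = fun c => compN kx ky X Y c - ((-1:ℤ)^(kx*ky)) • compN ky kx Y X c :=
    fun _ _ _ _ => rfl
  rw [hbrEval (k1+k2) k3, hbrEval (k2+k3) k1, hbrEval (k3+k1) k2]
  rw [show compN (k1+k2) k3 (brN k1 k2 F1 F2) F3 b
      = compN (k1+k2) k3 (compN k1 k2 F1 F2) F3 b
        - ((-1:ℤ)^(k1*k2)) • compN (k1+k2) k3 (compN k2 k1 F2 F1) F3 b from by
    rw [hlam k1 k2 F1 F2]; exact compN_outer_sub_zsmul _ _ _ _ _ _ _]
  rw [show compN k3 (k1+k2) F3 (brN k1 k2 F1 F2) b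
      = compN k3 (k1+k2) F3 (compN k1 k2 F1 F2) b
        - ((-1:ℤ)^(k1*k2)) • compN k3 (k1+k2) F3 (compN k2 k1 F2 F1) b from by
    rw [hlam k1 k2 F1 F2]; exact compN_inner_sub_zsmul _ _ _ _ _ hS3 _ _]
  rw [show compN (k2+k3) k1 (brN k2 k3 F2 F3) F1 b
      = compN (k2+k3) k1 (compN k2 k3 F2 F3) F1 b
        - ((-1:ℤ)^(k2*k3)) • compN (k2+k3) k1 (compN k3 k2 F3 F2) F1 b from by
    rw [hlam k2 k3 F2 F3]; exact compN_outer_sub_zsmul _ _ _ _ _ _ _]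
  rw [show compN k1 (k2+k3) F1 (brN k2 k3 F2 F3) b
      = compN k1 (k2+k3) F1 (compN k2 k3 F2 F3) b
        - ((-1:ℤ)^(k2*k3)) • compN k1 (k2+k3) F1 (compN k3 k2 F3 F2) b from by
    rw [hlam k2 k3 F2 F3]; exact compN_inner_sub_zsmul _ _ _ _ _ hS1 _ _]
  rw [show compN (k3+k1) k2 (brN k3 k1 F3 F1) F2 b
      = compN (k3+k1) k2 (compN k3 k1 F3 F1) F2 b
        - ((-1:ℤ)^(k3*k1)) • compN (k3+k1) k2 (compN k1 k3 F1 F3) F2 b from by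
    rw [hlam k3 k1 F3 F1]; exact compN_outer_sub_zsmul _ _ _ _ _ _ _]
  rw [show compN k2 (k3+k1) F2 (brN k3 k1 F3 F1) b
      = compN k2 (k3+k1) F2 (compN k3 k1 F3 F1) b
        - ((-1:ℤ)^(k3*k1)) • compN k2 (k3+k1) F2 (compN k1 k3 F1 F3) b from by
    rw [hlam k3 k1 F3 F1]; exact compN_inner_sub_zsmul _ _ _ _ _ hS2 _ _]
  have E1 := preLie k1 k2 k3 F1 F2 F3 hS1 hD2 hD3 b
  have E2 := preLie k2 k3 k1 F2 F3 F1 hS2 hD3 hD1 b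
  have E3 := preLie k3 k1 k2 F3 F1 F2 hS3 hD1 hD2 b
  -- canonicalize degree sums and sign exponents
  simp only [show k2 + k1 = k1 + k2 from Nat.add_comm k2 k1,
    show k3 + k1 = k1 + k3 from Nat.add_comm k3 k1,
    show k3 + k2 = k2 + k3 from Nat.add_comm k3 k2,
    show k2 * k1 = k1 * k2 from Nat.mul_comm k2 k1,
    show k3 * k1 = k1 * k3 from Nat.mul_comm k3 k1,
    show k3 * k2 = k2 * k3 from Nat.mul_comm k3 k2,
    add_mul, pow_add] at E1 E2 E3 ⊢
  have e1 := eq_add_of_sub_eq E1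
  have e2 := eq_add_of_sub_eq E2
  have e3 := eq_add_of_sub_eq E3
  rw [e1, e2, e3]
  have hs : ∀ n : ℕ, ((-1:ℤ))^n = 1 ∨ ((-1:ℤ))^n = -1 := fun n =>
    n.even_or_odd.elim (fun h => Or.inl h.neg_one_pow) (fun h => Or.inr h.neg_one_pow)
  rcases hs (k1*k2) with h12 | h12 <;> rcases hs (k1*k3) with h13 | h13 <;>
    rcases hs (k2*k3) with h23 | h23 <;>
    simp only [h12, h13, h23] <;> module

def liftN (k : ℕ) (φ : (Fin (k+1) → A) → A) : (ℕ → A) → A :=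
  fun b => φ (fun j => b j)

theorem liftN_dep (k : ℕ) (φ : (Fin (k+1) → A) → A) : Depk k (liftN k φ) := by
  intro b b' h
  unfold liftN
  apply congrArg φ
  funext j
  exact h j (by omega)

theorem update_comp (k i : ℕ) (hi : i < k + 1) (b : ℕ → A) (x : A) :
    (fun j : Fin (k+1) => Function.update b i x (j : ℕ))
      = Function.update (fun j : Fin (k+1) => b (j : ℕ)) ⟨i, hi⟩ x := by
  funext j
  simp only [Function.update_apply, Fin.ext_iff]

theorem liftN_slotAdd {R : Type*} [Semiring R] [Module R A] (k : ℕ)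
    (φ : MultilinearMap R (fun _ : Fin (k+1) => A) A) : SlotAdd k (liftN k ⇑φ) := by
  intro b i hi x y
  have hi' : i < k + 1 := by omega
  unfold liftN
  rw [update_comp k i hi' b (x+y), update_comp k i hi' b x, update_comp k i hi' b y]
  exact φ.map_update_add _ ⟨i, hi'⟩ x y

theorem gcomp_lift (k1 k2 : ℕ) (f : (Fin (k1 + 1) → A) → A) (g : (Fin (k2 + 1) → A) → A)
    (b : ℕ → A) :
    gcomp k1 k2 f g (fun j => b (j : ℕ)) = compN k1 k2 (liftN k1 f) (liftN k2 g) b := by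
  unfold gcomp compN
  rw [← Fin.sum_univ_eq_sum_range (fun n => ((-1:ℤ)^(n*k2)) • insN n k2 (liftN k1 f) (liftN k2 g) b) (k1+1)]
  refine Finset.sum_congr rfl fun i _ => ?_
  congr 1

theorem gbracket_lift (k1 k2 : ℕ) (f : (Fin (k1 + 1) → A) → A) (g : (Fin (k2 + 1) → A) → A)
    (b : ℕ → A) :
    gbracket k1 k2 f g (fun j => b (j : ℕ)) = brN k1 k2 (liftN k1 f) (liftN k2 g) b := by
  unfold gbracket brN
  rw [gcomp_lift]
  congr 1
  congr 1
  have : (fun j : Fin (k2 + k1 + 1) =>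
      (fun j' : Fin (k1 + k2 + 1) => b (j' : ℕ)) (Fin.cast (by omega) j))
      = fun j : Fin (k2 + k1 + 1) => b (j : ℕ) := rfl
  rw [this, gcomp_lift]

theorem liftN_gbracket (k1 k2 : ℕ) (f : (Fin (k1 + 1) → A) → A)
    (g : (Fin (k2 + 1) → A) → A) :
    liftN (k1 + k2) (gbracket k1 k2 f g) = brN k1 k2 (liftN k1 f) (liftN k2 g) := by
  funext b
  exact gbracket_lift k1 k2 f g b

end GJac

/-- graded Jacobi identity for the Gerstenhaber bracket:
`(-1)^{k₁k₃} [[φ₁,φ₂],φ₃] + (-1)^{k₂k₁} [[φ₂,φ₃],φ₁] + (-1)^{k₃k₂} [[φ₃,φ₁],φ₂] = 0`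
for Hochschild cochains `φᵢ ∈ C^{kᵢ+1}(A,A)`. -/
theorem gbracket_jacobi {K A : Type*} [Field K] [Ring A] [Algebra K A] (k1 k2 k3 : ℕ)
    (φ1 : MultilinearMap K (fun _ : Fin (k1 + 1) => A) A)
    (φ2 : MultilinearMap K (fun _ : Fin (k2 + 1) => A) A)
    (φ3 : MultilinearMap K (fun _ : Fin (k3 + 1) => A) A)
    (a : Fin (k1 + k2 + k3 + 1) → A) :
    ((-1 : ℤ) ^ (k1 * k3)) • gbracket (k1 + k2) k3 (gbracket k1 k2 ⇑φ1 ⇑φ2) ⇑φ3 a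
      + ((-1 : ℤ) ^ (k2 * k1)) • gbracket (k2 + k3) k1 (gbracket k2 k3 ⇑φ2 ⇑φ3) ⇑φ1
          (fun j => a (Fin.cast (by omega) j))
      + ((-1 : ℤ) ^ (k3 * k2)) • gbracket (k3 + k1) k2 (gbracket k3 k1 ⇑φ3 ⇑φ1) ⇑φ2
          (fun j => a (Fin.cast (by omega) j)) = 0 := by
  classical
  obtain ⟨b, hb⟩ : ∃ b : ℕ → A, a = fun j : Fin (k1+k2+k3+1) => b (j:ℕ) :=
    ⟨fun n => if h : n < k1+k2+k3+1 then a ⟨n, h⟩ else 0, by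
      funext j
      simp [j.isLt]⟩
  rw [hb]
  have hc2 : (fun j : Fin (k2+k3+k1+1) =>
      (fun j' : Fin (k1+k2+k3+1) => b (j':ℕ)) (Fin.cast (by omega) j))
      = fun j : Fin (k2+k3+k1+1) => b (j:ℕ) := rfl
  have hc3 : (fun j : Fin (k3+k1+k2+1) =>
      (fun j' : Fin (k1+k2+k3+1) => b (j':ℕ)) (Fin.cast (by omega) j))
      = fun j : Fin (k3+k1+k2+1) => b (j:ℕ) := rfl
  rw [hc2, hc3]
  rw [GJac.gbracket_lift (k1+k2) k3 (gbracket k1 k2 ⇑φ1 ⇑φ2) ⇑φ3 b,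
    GJac.gbracket_lift (k2+k3) k1 (gbracket k2 k3 ⇑φ2 ⇑φ3) ⇑φ1 b,
    GJac.gbracket_lift (k3+k1) k2 (gbracket k3 k1 ⇑φ3 ⇑φ1) ⇑φ2 b,
    GJac.liftN_gbracket, GJac.liftN_gbracket, GJac.liftN_gbracket]
  exact GJac.jacobiN k1 k2 k3 (GJac.liftN k1 ⇑φ1) (GJac.liftN k2 ⇑φ2) (GJac.liftN k3 ⇑φ3)
    (GJac.liftN_slotAdd k1 φ1) (GJac.liftN_slotAdd k2 φ2) (GJac.liftN_slotAdd k3 φ3)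
    (GJac.liftN_dep k1 ⇑φ1) (GJac.liftN_dep k2 ⇑φ2) (GJac.liftN_dep k3 ⇑φ3) b
end

section
/- (Hochschild–Kostant–Rosenberg cocycle property.) Let A be a commutative algebra over a field k of characteristic 0 and let ξ_1,…,ξ_n be k-linear derivations of A. Then the Hochschild cochain φ_HKR(ξ_1∧…∧ξ_n) ∈ C^n(A,A) defined by φ_HKR(ξ_1∧…∧ξ_n)(f_1⊗…⊗f_n) = (1/n!)·Σ_{σ∈S_n} sgn(σ)·Π_{i=1}^n ξ_{σ(i)}(f_i) is a Hochschild cocycle: d(φ_HKR(ξ_1∧…∧ξ_n)) = 0. -/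
/-- The Hochschild cochain differential: for a `n`-cochain `f`,
`(d f)(a₀ ⊗ … ⊗ a_n) = a₀ · f(a₁ ⊗ … ⊗ a_n)
  + ∑_{i=1}^{n} (-1)^i f(a₀ ⊗ … ⊗ a_{i-1}·a_i ⊗ … ⊗ a_n)
  + (-1)^{n+1} f(a₀ ⊗ … ⊗ a_{n-1}) · a_n`  (indices shifted to start from 0). -/
def hd {A : Type*} [Ring A] (n : ℕ) (f : (Fin n → A) → A) : (Fin (n + 1) → A) → A := fun a =>
  a 0 * f (fun j => a j.succ)
    + ∑ i : Fin n, ((-1 : ℤ) ^ ((i : ℕ) + 1)) •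
        f (fun j => if _ : (j : ℕ) < (i : ℕ) then a ⟨j, by omega⟩
          else if _ : (j : ℕ) = (i : ℕ) then a ⟨i, by omega⟩ * a ⟨(i : ℕ) + 1, by omega⟩
          else a ⟨(j : ℕ) + 1, by omega⟩)
    + ((-1 : ℤ) ^ (n + 1)) • (f (fun j => a j.castSucc) * a (Fin.last n))

/-!
Both `hd n` and the cochain are linear in the right way, so it suffices that every single product
`f ↦ ∏ᵢ ηᵢ(fᵢ)` of derivations is a cocycle. For that, let `Sₖ = aₖ · ∏ⱼ ηⱼ(bₖⱼ)`, where `bₖⱼ` is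
`aⱼ` for `j < k` and `aⱼ₊₁` otherwise. By the Leibniz rule the `i`-th face term of the differential
is `Sᵢ + Sᵢ₊₁`, while the two outer terms are `S₀` and `±Sₙ`, so the alternating sum telescopes
to zero.
-/

open Finset

theorem Fin.sum_neg_one_pow_smul_castSucc_add_succ {M : Type*} [AddCommGroup M] :
    ∀ (n : ℕ) (S : Fin (n + 1) → M),
      ∑ i : Fin n, (-1 : ℤ) ^ ((i : ℕ) + 1) • (S i.castSucc + S i.succ)
        = (-1 : ℤ) ^ n • S (Fin.last n) - S 0
  | 0, S => by simp
  | n + 1, S => by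
    rw [Fin.sum_univ_castSucc]
    simp only [Fin.val_castSucc, Fin.succ_castSucc, Fin.val_last, Fin.succ_last]
    rw [sum_neg_one_pow_smul_castSucc_add_succ n (fun i => S i.castSucc), Fin.castSucc_zero]
    simp only [pow_succ, mul_neg_one, neg_smul, smul_add]
    abel

theorem Fintype.prod_eq_mul_prod_add_mul_prod {ι R : Type*} [Fintype ι] [DecidableEq ι]
    [CommSemiring R] {c d e : ι → R} (i : ι) {x y : R} (hi : c i = x * d i + y * e i)
    (hd_eq : ∀ j ≠ i, d j = c j) (he_eq : ∀ j ≠ i, e j = c j) :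
    ∏ j, c j = x * ∏ j, d j + y * ∏ j, e j := by
  simp only [← mul_prod_erase univ _ (mem_univ i)]
  rw [Finset.prod_congr rfl fun j hj => hd_eq j (ne_of_mem_erase hj),
    Finset.prod_congr rfl fun j hj => he_eq j (ne_of_mem_erase hj), hi]
  ring

namespace Hochschild

section MergeAt

variable {A : Type*} [Mul A] {n : ℕ}

def mergeAt (a : Fin (n + 1) → A) (i : Fin n) : Fin n → A := fun j =>
  if _ : (j : ℕ) < (i : ℕ) then a ⟨j, by omega⟩
  else if _ : (j : ℕ) = (i : ℕ) then a ⟨i, by omega⟩ * a ⟨(i : ℕ) + 1, by omega⟩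
  else a ⟨(j : ℕ) + 1, by omega⟩

theorem mergeAt_of_lt (a : Fin (n + 1) → A) {i j : Fin n} (h : j < i) :
    mergeAt a i j = a j.castSucc :=
  dif_pos h

theorem mergeAt_self (a : Fin (n + 1) → A) (i : Fin n) :
    mergeAt a i i = a i.castSucc * a i.succ := by
  simp only [mergeAt, lt_irrefl, dite_false, dite_true]
  rfl

theorem mergeAt_of_gt (a : Fin (n + 1) → A) {i j : Fin n} (h : i < j) :
    mergeAt a i j = a j.succ := by
  simp only [mergeAt, Fin.lt_def] at h ⊢
  rw [dif_neg (by omega), dif_neg (by omega)]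
  rfl

end MergeAt

section Linearity

variable {A : Type*} [Ring A] (n : ℕ)

theorem hd_apply (f : (Fin n → A) → A) (a : Fin (n + 1) → A) :
    hd n f a = a 0 * f (fun j => a j.succ)
      + ∑ i : Fin n, (-1 : ℤ) ^ ((i : ℕ) + 1) • f (mergeAt a i)
      + (-1 : ℤ) ^ (n + 1) • (f (fun j => a j.castSucc) * a (Fin.last n)) :=
  rfl

theorem hd_smul {M : Type*} [Monoid M] [DistribMulAction M A] [SMulCommClass M A A]
    [SMulCommClass ℤ M A] [IsScalarTower M A A]
    (c : M) (g : (Fin n → A) → A) (a : Fin (n + 1) → A) :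
    hd n (fun f => c • g f) a = c • hd n g a := by
  simp only [hd, mul_smul_comm, smul_mul_assoc, smul_comm _ c, smul_sum, smul_add]

theorem hd_sum {ι : Type*} (s : Finset ι) (g : ι → (Fin n → A) → A) (a : Fin (n + 1) → A) :
    hd n (fun f => ∑ σ ∈ s, g σ f) a = ∑ σ ∈ s, hd n (g σ) a := by
  simp only [hd, mul_sum, sum_mul, smul_sum, sum_add_distrib]
  rw [sum_comm]

end Linearity

section ProdDerivation

variable {K A : Type*} [CommSemiring K] [CommRing A] [Algebra K A] {n : ℕ}
  (η : Fin n → Derivation K A A) (a : Fin (n + 1) → A)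

/-- The term `Sₖ` of the telescoping sum. -/
def splitTerm (k : Fin (n + 1)) : A :=
  a k * ∏ j, η j (if j.castSucc < k then a j.castSucc else a j.succ)

theorem splitTerm_zero : splitTerm η a 0 = a 0 * ∏ j, η j (a j.succ) := by
  simp [splitTerm]

theorem splitTerm_last :
    splitTerm η a (Fin.last n) = (∏ j, η j (a j.castSucc)) * a (Fin.last n) := by
  simp [splitTerm, Fin.castSucc_lt_last, mul_comm]

theorem prod_mergeAt (i : Fin n) :
    ∏ j, η j (mergeAt a i j) = splitTerm η a i.castSucc + splitTerm η a i.succ := by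
  have hne : ∀ j ≠ i, η j (if j.castSucc < i.castSucc then a j.castSucc else a j.succ)
      = η j (mergeAt a i j) ∧
      η j (if j.castSucc < i.succ then a j.castSucc else a j.succ) = η j (mergeAt a i j) := by
    intro j hj
    rcases lt_or_gt_of_ne hj with h | h
    · simp [mergeAt_of_lt a h, h, (Fin.castSucc_lt_castSucc_iff.2 h).trans i.castSucc_lt_succ]
    · simp [mergeAt_of_gt a h, h.le, Fin.succ_le_castSucc_iff.2 h, not_lt.2]
  unfold splitTerm
  refine Fintype.prod_eq_mul_prod_add_mul_prod i ?_ (fun j hj => (hne j hj).1)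
    fun j hj => (hne j hj).2
  simp only [lt_irrefl, if_false, Fin.castSucc_lt_succ, if_true, mergeAt_self,
    Derivation.leibniz, smul_eq_mul]

theorem hd_prod_derivation : hd n (fun f => ∏ i, η i (f i)) a = 0 := by
  simp only [hd_apply, prod_mergeAt]
  rw [Fin.sum_neg_one_pow_smul_castSucc_add_succ, ← splitTerm_zero, ← splitTerm_last, pow_succ,
    mul_neg_one, neg_smul]
  abel

end ProdDerivation

end Hochschild

theorem hkr_cocycle_general {K A : Type*} [Field K] [CommRing A] [Algebra K A]
    (n : ℕ) (ξ : Fin n → Derivation K A A) (a : Fin (n + 1) → A) :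
    hd n (fun f : Fin n → A =>
      ((n.factorial : K)⁻¹) •
        ∑ σ : Equiv.Perm (Fin n), ((Equiv.Perm.sign σ : ℤ) • ∏ i : Fin n, ξ (σ i) (f i))) a
      = 0 := by
  rw [Hochschild.hd_smul, Hochschild.hd_sum, sum_eq_zero, smul_zero]
  intro σ _
  rw [Hochschild.hd_smul, Hochschild.hd_prod_derivation (fun i => ξ (σ i)), smul_zero]

/-- STATEMENT 10 (HKR cocycle property): for a commutative algebra `A` over a field `K` of
characteristic `0` and `K`-linear derivations `ξ₁,…,ξ_n` of `A`, the antisymmetrized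
Hochschild cochain
`φ_HKR(ξ₁ ∧ … ∧ ξ_n)(f₁ ⊗ … ⊗ f_n) = (1/n!) ∑_{σ ∈ S_n} sgn(σ) ∏ᵢ ξ_{σ(i)}(fᵢ)`
is a Hochschild cocycle: `d(φ_HKR(ξ₁ ∧ … ∧ ξ_n)) = 0`. -/
theorem hkr_cocycle {K A : Type*} [Field K] [CharZero K] [CommRing A] [Algebra K A]
    (n : ℕ) (ξ : Fin n → Derivation K A A) (a : Fin (n + 1) → A) :
    hd n (fun f : Fin n → A =>
      ((n.factorial : K)⁻¹) •
        ∑ σ : Equiv.Perm (Fin n), ((Equiv.Perm.sign σ : ℤ) • ∏ i : Fin n, ξ (σ i) (f i))) a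
      = 0 :=
  hkr_cocycle_general n ξ a
end
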